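/- Let B and D be bicategories, F : B → D a pseudofunctor, and suppose (x₁, θ₁) and (x₂, θ₂) are both colimits of F. Then x₁ and x₂ are equivalent objects of D: there exist 1-morphisms u : x₁ → x₂ and v : x₂ → x₁ together with invertible 2-morphisms from v ∘ u to the identity 1-morphism of x₁ and from u ∘ v to the identity 1-morphism of x₂. -/

import Mathlib

open CategoryTheory Bicategory

attribute [local instance] Pseudofunctor.StrongTrans.categoryStruct

universe w₁ w₂ v₁ v₂ u₁ u₂

namespace BicatColim

variable (B : Type u₁) [Bicategory.{w₁, v₁} B] {D : Type u₂} [Bicategory.{w₂, v₂} D]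

/-- The constant pseudofunctor with value `x`. -/
@[simps]
def constPF (x : D) : Pseudofunctor B D where
  obj _ := x
  map _ := 𝟙 x
  map₂ _ := 𝟙 (𝟙 x)
  mapId _ := Iso.refl (𝟙 x)
  mapComp _ _ := (λ_ (𝟙 x)).symm

end BicatColim

namespace BicatColim

variable {B : Type u₁} [Bicategory.{w₁, v₁} B] {D : Type u₂} [Bicategory.{w₂, v₂} D]

variable (B) in
/-- The constant transformation `const_u : const x ⟶ const y` induced by a 1-morphism
`u : x ⟶ y`. -/
@[simps]
def constTrans {x y : D} (u : x ⟶ y) : constPF B x ⟶ constPF B y where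
  app _ := u
  naturality _ := λ_ u ≪≫ (ρ_ u).symm
  naturality_naturality _ := by
    show 𝟙 (𝟙 x) ▷ u ≫ ((λ_ u).hom ≫ (ρ_ u).inv) = ((λ_ u).hom ≫ (ρ_ u).inv) ≫ u ◁ 𝟙 (𝟙 y)
    simp
  naturality_id _ := by
    show ((λ_ u).hom ≫ (ρ_ u).inv) ≫ u ◁ 𝟙 (𝟙 y) = 𝟙 (𝟙 x) ▷ u ≫ (λ_ u).hom ≫ (ρ_ u).inv
    simp
  naturality_comp _ _ := by
    show ((λ_ u).hom ≫ (ρ_ u).inv) ≫ u ◁ (λ_ (𝟙 y)).inv = (λ_ (𝟙 x)).inv ▷ u ≫ (α_ (𝟙 x) (𝟙 x) u).hom ≫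
      𝟙 x ◁ ((λ_ u).hom ≫ (ρ_ u).inv) ≫ (α_ (𝟙 x) u (𝟙 y)).inv ≫ ((λ_ u).hom ≫ (ρ_ u).inv) ▷ 𝟙 y ≫
      (α_ u (𝟙 y) (𝟙 y)).hom
    bicategory

end BicatColim

namespace BicatColim

variable {B : Type u₁} [Bicategory.{w₁, v₁} B] {D : Type u₂} [Bicategory.{w₂, v₂} D]

/-- The category `Hom(F, G)` whose objects are strong natural transformations `F ⟹ G`
and whose morphisms are modifications. -/
instance homCategory (F G : Pseudofunctor B D) : Category (F ⟶ G) where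
  Hom η θ := Oplax.OplaxTrans.Modification η.toOplax.toOplax θ.toOplax.toOplax
  id η := Oplax.OplaxTrans.Modification.id η.toOplax.toOplax
  comp Γ Λ := Γ.vcomp Λ

end BicatColim

namespace BicatColim

variable {B : Type u₁} [Bicategory.{w₁, v₁} B] {D : Type u₂} [Bicategory.{w₂, v₂} D]

variable (B) in
/-- The modification `const_β : const_{u₁} ⟶ const_{u₂}` induced by a 2-morphism `β`. -/
@[simps]
def constMod {x y : D} {u₁ u₂ : x ⟶ y} (β : u₁ ⟶ u₂) :
    constTrans B u₁ ⟶ constTrans B u₂ where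
  app _ := β
  naturality _ := by
    show 𝟙 x ◁ β ≫ ((λ_ u₂).hom ≫ (ρ_ u₂).inv) = ((λ_ u₁).hom ≫ (ρ_ u₁).inv) ≫ β ▷ 𝟙 y
    bicategory

end BicatColim

namespace BicatColim

variable {B : Type u₁} [Bicategory.{w₁, v₁} B] {D : Type u₂} [Bicategory.{w₂, v₂} D]

variable (B) in
/-- Whiskering a 2-morphism `β : u₁ ⟶ u₂` with a transformation `θ : F ⟶ const x` yields a
modification `const_{u₁} ∘ θ ⟶ const_{u₂} ∘ θ`. -/
def whiskerConst {F : Pseudofunctor B D} {x y : D} (θ : F ⟶ constPF B x)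
    {u₁ u₂ : x ⟶ y} (β : u₁ ⟶ u₂) :
    (θ ≫ constTrans B u₁) ⟶ (θ ≫ constTrans B u₂) :=
  (Oplax.OplaxTrans.whiskerLeft θ.toOplax.toOplax (Oplax.OplaxTrans.Hom.of (constMod B β))).as

end BicatColim

namespace BicatColim

variable {B : Type u₁} [Bicategory.{w₁, v₁} B] {D : Type u₂} [Bicategory.{w₂, v₂} D]

variable (B) in
/-- The functor `D(x, y) ⥤ Hom(F, const y)` sending `u : x ⟶ y` to the composite
transformation `const_u ∘ θ` and a 2-morphism `β` to the induced modification. -/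
@[simps]
def precompFunctor {F : Pseudofunctor B D} {x : D} (θ : F ⟶ constPF B x) (y : D) :
    (x ⟶ y) ⥤ (F ⟶ constPF B y) where
  obj u := θ ≫ constTrans B u
  map β := whiskerConst B θ β
  map_id u := by
    apply Oplax.OplaxTrans.Modification.ext
    funext a
    exact Bicategory.whiskerLeft_id _ _
  map_comp β₁ β₂ := by
    apply Oplax.OplaxTrans.Modification.ext
    funext a
    exact Bicategory.whiskerLeft_comp _ _ _

variable (B) in
/-- `(x, θ)` is a colimit of the pseudofunctor `F : B ⥤ D` if for every object `y` of `D`,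
postcomposition with `θ` is an equivalence of categories `D(x, y) ≌ Hom(F, const y)`. -/
def IsColimit {F : Pseudofunctor B D} {x : D} (θ : F ⟶ constPF B x) : Prop :=
  ∀ y : D, (precompFunctor B θ y).IsEquivalence

end BicatColim

/-!
Precomposition with `θ₁` is essentially surjective, so `θ₁ ≫ const_u ≅ θ₂` for some `u`, and
likewise `θ₂ ≫ const_v ≅ θ₁`. Chaining these through the unitor and associator for `const` gives
`θ₁ ≫ const_(u ≫ v) ≅ θ₁ ≫ const_(𝟙 x₁)`, and full faithfulness of precomposition with `θ₁`
lifts it to `u ≫ v ≅ 𝟙 x₁`; symmetrically `v ≫ u ≅ 𝟙 x₂`.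
-/

namespace BicatColim

variable {B : Type u₁} [Bicategory.{w₁, v₁} B] {D : Type u₂} [Bicategory.{w₂, v₂} D]
  {F G : Pseudofunctor B D}

/-- Mathlib's `Pseudofunctor.StrongTrans.isoMk` lives in the scoped category of strong
transformations, not in `homCategory`. -/
def isoMk {η θ : F ⟶ G} (app : ∀ a, η.app a ≅ θ.app a)
    (naturality : ∀ {a b} (f : a ⟶ b),
      F.map f ◁ (app b).hom ≫ (θ.naturality f).hom =
        (η.naturality f).hom ≫ (app a).hom ▷ G.map f) :
    η ≅ θ where
  hom.app a := (app a).hom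
  hom.naturality := naturality
  inv.app a := (app a).inv
  inv.naturality {a b} f := by
    change F.map f ◁ (app b).inv ≫ (η.naturality f).hom =
      (θ.naturality f).hom ≫ (app a).inv ▷ G.map f
    simpa using _ ◁ (app b).inv ≫= (naturality f).symm =≫ (app a).inv ▷ _
  hom_inv_id := Oplax.OplaxTrans.Modification.ext <| funext fun a => (app a).hom_inv_id
  inv_hom_id := Oplax.OplaxTrans.Modification.ext <| funext fun a => (app a).inv_hom_id

variable {x y z : D}

@[simp]
theorem constTrans_naturality_hom (u : x ⟶ y) {a b : B} (f : a ⟶ b) :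
    ((constTrans B u).naturality f).hom = (λ_ u).hom ≫ (ρ_ u).inv := rfl

def precompIdIso (θ : F ⟶ constPF B x) : θ ≫ constTrans B (𝟙 x) ≅ θ :=
  isoMk (fun a => ρ_ (θ.app a)) fun f => by
    simp only [Pseudofunctor.StrongTrans.categoryStruct_comp_naturality_hom]
    dsimp
    -- `constTrans_app` does not fire: it is ill-typed up to reducible unfolding of `constPF`.
    dsimp only [constTrans]
    bicategory

def precompCompIso (θ : F ⟶ constPF B x) (u : x ⟶ y) (v : y ⟶ z) :
    θ ≫ constTrans B (u ≫ v) ≅ (θ ≫ constTrans B u) ≫ constTrans B v :=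
  isoMk (fun a => (α_ (θ.app a) u v).symm) fun f => by
    simp only [Pseudofunctor.StrongTrans.categoryStruct_comp_naturality_hom]
    dsimp
    dsimp only [constTrans]
    bicategory

variable (B) in
def postcompFunctor (v : y ⟶ z) : (F ⟶ constPF B y) ⥤ (F ⟶ constPF B z) where
  obj η := η ≫ constTrans B v
  map Γ := (Oplax.OplaxTrans.whiskerRight (Oplax.OplaxTrans.Hom.of Γ)
    (constTrans B v).toOplax.toOplax).as
  map_id _ := Oplax.OplaxTrans.Modification.ext <| funext fun _ => id_whiskerRight _ _
  map_comp _ _ := Oplax.OplaxTrans.Modification.ext <| funext fun _ => comp_whiskerRight _ _ _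

namespace IsColimit

variable {θ : F ⟶ constPF B x}

theorem exists_precomp_iso (h : IsColimit B θ) (η : F ⟶ constPF B y) :
    ∃ u : x ⟶ y, Nonempty (θ ≫ constTrans B u ≅ η) :=
  have := h y
  ⟨_, ⟨(precompFunctor B θ y).objObjPreimageIso η⟩⟩

theorem nonempty_iso_of_precomp_iso (h : IsColimit B θ) {u u' : x ⟶ y}
    (e : θ ≫ constTrans B u ≅ θ ≫ constTrans B u') : Nonempty (u ≅ u') :=
  have := h y
  ⟨(precompFunctor B θ y).preimageIso e⟩

theorem nonempty_comp_iso_id {θ' : F ⟶ constPF B y} (h : IsColimit B θ) {u : x ⟶ y} {v : y ⟶ x}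
    (e : θ ≫ constTrans B u ≅ θ') (e' : θ' ≫ constTrans B v ≅ θ) :
    Nonempty (u ≫ v ≅ 𝟙 x) :=
  h.nonempty_iso_of_precomp_iso <|
    precompCompIso θ u v ≪≫ (postcompFunctor B v).mapIso e ≪≫ e' ≪≫ (precompIdIso θ).symm

end IsColimit

/-- Any two colimits `(x₁, θ₁)` and `(x₂, θ₂)` of a pseudofunctor
`F : B ⥤ D` are equivalent objects of `D`: there are 1-morphisms `u : x₁ ⟶ x₂` and
`v : x₂ ⟶ x₁` together with invertible 2-morphisms `u ≫ v ≅ 𝟙 x₁` and `v ≫ u ≅ 𝟙 x₂`. -/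
theorem colimit_unique_up_to_equivalence (F : Pseudofunctor B D) {x₁ x₂ : D}
    (θ₁ : F ⟶ constPF B x₁) (θ₂ : F ⟶ constPF B x₂)
    (h₁ : IsColimit B θ₁) (h₂ : IsColimit B θ₂) :
    ∃ (u : x₁ ⟶ x₂) (v : x₂ ⟶ x₁),
      Nonempty (u ≫ v ≅ 𝟙 x₁) ∧ Nonempty (v ≫ u ≅ 𝟙 x₂) := by
  obtain ⟨u, ⟨e₁⟩⟩ := h₁.exists_precomp_iso θ₂
  obtain ⟨v, ⟨e₂⟩⟩ := h₂.exists_precomp_iso θ₁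
  exact ⟨u, v, h₁.nonempty_comp_iso_id e₁ e₂, h₂.nonempty_comp_iso_id e₂ e₁⟩

end BicatColim
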